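/- Existence for the generalized Tzitzéica equation under coefficient comparison: let G be a connected finite graph, h₁, h₂ : V → ℝ strictly positive, A, B > 0. If A·max_V h₁ < B·min_V h₂, then there exists u : V → ℝ with u(x) > 0 for all x solving −Δu + h₁(x)·e^{Au}(e^{Au} − 1) + h₂(x)·e^{−Bu}(e^{−Bu} − 1) = 0 on V. -/

import Mathlib

/-!
The solution is a minimiser of the energy `J(u) = ½ ∑ μ |∇u|² + ∑ μ F(u)`, `F' = f`, over the
order interval between a constant subsolution `δ > 0` and a constant supersolution `β`. The
derivative of `J` in the coordinate `x` is `μ(x) (-Δu + f(u))(x)`. At a minimiser it has the sign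
the constraint allows, and where `u` touches a barrier the comparison of graph Laplacians at a
touching point forces the opposite sign, so it vanishes. The constants exist because `f(0) = 0`
and `f'(0) = A h₁ - B h₂ < 0`, so `f(δ) < 0` for small `δ > 0`, while `f → ∞`.
-/

open Finset Real

noncomputable def graphLap {V : Type*} [Fintype V] (μ : V → ℝ) (w : V → V → ℝ)
    (u : V → ℝ) (x : V) : ℝ :=
  (1 / μ x) * ∑ y, w x y * (u y - u x)

noncomputable def gradSq {V : Type*} [Fintype V] (μ : V → ℝ) (w : V → V → ℝ)
    (u : V → ℝ) (x : V) : ℝ :=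
  (1 / (2 * μ x)) * ∑ y, w x y * (u y - u x) ^ 2

def GraphConnected {V : Type*} (w : V → V → ℝ) : Prop :=
  ∀ x y : V, Relation.ReflTransGen (fun a b => 0 < w a b) x y

open Filter Topology

section OneVariable

variable {g : ℝ → ℝ} {d a b c : ℝ}

theorem HasDerivAt.eventually_lt_left (hg : HasDerivAt g d c) (hd : 0 < d) :
    ∀ᶠ t in 𝓝[<] c, g t < g c := by
  filter_upwards [((hasDerivAt_iff_tendsto_slope.1 hg).mono_left (nhdsLT_le_nhdsNE c)).eventually
    (lt_mem_nhds hd), self_mem_nhdsWithin] with t hslope htc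
  exact (slope_pos_iff_gt htc).1 hslope

theorem HasDerivAt.eventually_lt_right (hg : HasDerivAt g d c) (hd : d < 0) :
    ∀ᶠ t in 𝓝[>] c, g t < g c := by
  filter_upwards [((hasDerivAt_iff_tendsto_slope.1 hg.neg).mono_left
    (nhdsGT_le_nhdsNE c)).eventually (lt_mem_nhds (neg_pos.2 hd)), self_mem_nhdsWithin]
    with t hslope hct
  simpa using (slope_pos_iff hct).1 hslope

theorem IsMinOn.hasDerivAt_nonneg (hmin : IsMinOn g (Set.Icc a b) c) (hg : HasDerivAt g d c)
    (hac : a ≤ c) (hcb : c < b) : 0 ≤ d := by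
  by_contra! hd
  obtain ⟨t, hlt, hct, htb⟩ :=
    ((hg.eventually_lt_right hd).and (Ioo_mem_nhdsGT hcb)).exists
  exact (hmin ⟨hac.trans hct.le, htb.le⟩).not_gt hlt

theorem IsMinOn.hasDerivAt_nonpos (hmin : IsMinOn g (Set.Icc a b) c) (hg : HasDerivAt g d c)
    (hac : a < c) (hcb : c ≤ b) : d ≤ 0 := by
  by_contra! hd
  obtain ⟨t, hlt, hat, htc⟩ :=
    ((hg.eventually_lt_left hd).and (Ioo_mem_nhdsLT hac)).exists
  exact (hmin ⟨hat.le, htc.le.trans hcb⟩).not_gt hlt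

end OneVariable

section Tzitzeica

variable {A B p q : ℝ}

noncomputable def tzitzeicaNonlin (A B p q t : ℝ) : ℝ :=
  p * exp (A * t) * (exp (A * t) - 1) + q * exp (-B * t) * (exp (-B * t) - 1)

-- The paper's `1/A`, `1/B` become `1/(2A)`, `1/(2B)` so that the derivative is exactly the
-- nonlinearity of the equation.
noncomputable def tzitzeicaPotential (A B p q t : ℝ) : ℝ :=
  p * (exp (A * t) - 1) ^ 2 / (2 * A) - q * (exp (-B * t) - 1) ^ 2 / (2 * B)

theorem hasDerivAt_tzitzeicaPotential (hA : A ≠ 0) (hB : B ≠ 0) (t : ℝ) :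
    HasDerivAt (tzitzeicaPotential A B p q) (tzitzeicaNonlin A B p q t) t := by
  have hexp : ∀ k : ℝ, HasDerivAt (fun t => exp (k * t)) (exp (k * t) * k) t := fun k => by
    simpa using ((hasDerivAt_id t).const_mul k).exp
  refine (((((hexp A).sub_const 1).pow 2).const_mul p).div_const (2 * A) |>.sub
    ((((hexp (-B)).sub_const 1).pow 2).const_mul q |>.div_const (2 * B))).congr_deriv ?_
  unfold tzitzeicaNonlin
  field_simp
  ring

theorem hasDerivAt_tzitzeicaNonlin_zero :
    HasDerivAt (tzitzeicaNonlin A B p q) (A * p - B * q) 0 := by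
  have hexp : ∀ k : ℝ, HasDerivAt (fun t => exp (k * t)) k 0 := fun k => by
    simpa using ((hasDerivAt_id (0 : ℝ)).const_mul k).exp
  refine ((((hexp A).const_mul p).mul ((hexp A).sub_const 1)).add
    (((hexp (-B)).const_mul q).mul ((hexp (-B)).sub_const 1))).congr_deriv ?_
  simp only [mul_zero, exp_zero, sub_self, mul_one, zero_add, mul_neg]
  ring

theorem tzitzeicaNonlin_zero : tzitzeicaNonlin A B p q 0 = 0 := by
  simp [tzitzeicaNonlin]

theorem tendsto_tzitzeicaNonlin_atTop (hA : 0 < A) (hp : 0 < p) (hq : 0 ≤ q) :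
    Tendsto (tzitzeicaNonlin A B p q) atTop atTop := by
  have hs : Tendsto (fun s : ℝ => s * (s - 1)) atTop atTop :=
    tendsto_id.atTop_mul_atTop₀ (tendsto_atTop_add_const_right _ (-1) tendsto_id)
  have hlow : Tendsto (fun t => p * (exp (A * t) * (exp (A * t) - 1)) - q / 4) atTop atTop :=
    tendsto_atTop_add_const_right _ _ ((hs.comp (tendsto_exp_atTop.comp
      (tendsto_id.const_mul_atTop hA))).const_mul_atTop hp)
  refine tendsto_atTop_mono (fun t => ?_) hlow
  have : 0 ≤ q * (exp (-B * t) - 1 / 2) ^ 2 := by positivity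
  unfold tzitzeicaNonlin
  nlinarith

end Tzitzeica

section Graph

variable {V : Type*} [Fintype V] (μ : V → ℝ) (w : V → V → ℝ)

theorem graphLap_const (c : ℝ) (x : V) : graphLap μ w (fun _ => c) x = 0 := by
  simp [graphLap]

variable {μ w}

theorem graphLap_le_of_le_of_eq {u v : V → ℝ} {x : V} (hμ : 0 < μ x) (hw : ∀ y, 0 ≤ w x y)
    (hle : u ≤ v) (heq : u x = v x) : graphLap μ w u x ≤ graphLap μ w v x := by
  unfold graphLap
  gcongr with y
  · exact hw y
  · linarith [hle y]
  · exact heq.ge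

noncomputable def graphEnergy (μ : V → ℝ) (w : V → V → ℝ) (F : V → ℝ → ℝ) (u : V → ℝ) :
    ℝ :=
  (1 / 2) * ∑ x, μ x * gradSq μ w u x + ∑ x, μ x * F x (u x)

theorem continuous_graphEnergy {F : V → ℝ → ℝ} (hF : ∀ x, Continuous (F x)) :
    Continuous (graphEnergy μ w F) := by
  unfold graphEnergy gradSq
  fun_prop

theorem sum_sum_mul_sub_mul_single_sub [DecidableEq V] (hsym : ∀ x y, w x y = w y x)
    (u : V → ℝ) (x : V) :
    ∑ y, ∑ z, w y z * ((u z - u y) * ((Pi.single x 1 : V → ℝ) z - (Pi.single x 1 : V → ℝ) y))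
      = -2 * ∑ z, w x z * (u z - u x) := by
  simp only [mul_sub, Pi.single_apply, mul_ite, mul_one, mul_zero, sum_sub_distrib,
    sum_ite_eq', mem_univ, if_true]
  rw [sum_comm]
  simp only [sum_ite_eq', mem_univ, if_true, hsym _ x, sum_sub_distrib]
  ring

theorem hasDerivAt_graphEnergy_update [DecidableEq V] {F f : V → ℝ → ℝ}
    (hμ : ∀ x, μ x ≠ 0) (hsym : ∀ x y, w x y = w y x)
    (hF : ∀ x t, HasDerivAt (F x) (f x t) t) (u : V → ℝ) (x : V) :
    HasDerivAt (fun t => graphEnergy μ w F (Function.update u x t))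
      (μ x * (-graphLap μ w u x + f x (u x))) (u x) := by
  set e : V → ℝ := Pi.single x 1
  have hu : ∀ y, HasDerivAt (fun t => Function.update u x t y) (e y) (u x) :=
    hasDerivAt_pi.1 (hasDerivAt_update u x (u x))
  have hF' : ∀ y, HasDerivAt (fun t => F y (Function.update u x t y)) (f y (u y) * e y) (u x) :=
    fun y => by
      have := (hF y (Function.update u x (u x) y)).comp (u x) (hu y)
      rwa [Function.update_eq_self] at this
  have hdir : ∀ y z, HasDerivAt (fun t => (Function.update u x t z - Function.update u x t y) ^ 2)
      (2 * (u z - u y) * (e z - e y)) (u x) :=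
    fun y z => by simpa using ((hu z).fun_sub (hu y)).fun_pow 2
  unfold graphEnergy gradSq
  refine (((HasDerivAt.fun_sum fun y _ => ((HasDerivAt.fun_sum fun z _ =>
    (hdir y z).const_mul (w y z)).const_mul _).const_mul (μ y)).const_mul _).add
    (HasDerivAt.fun_sum fun y _ => (hF' y).const_mul (μ y))).congr_deriv ?_
  have hμ_half : ∀ y, μ y * (1 / (2 * μ y) * ∑ z, w y z * (2 * (u z - u y) * (e z - e y)))
      = ∑ z, w y z * ((u z - u y) * (e z - e y)) := fun y => by
    rw [mul_sum, mul_sum]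
    refine sum_congr rfl fun z _ => ?_
    field_simp [hμ y]
  have hpot : ∑ y, μ y * (f y (u y) * e y) = μ x * f x (u x) := by
    simp [e, Pi.single_apply]
  rw [hpot, sum_congr rfl fun y _ => hμ_half y, sum_sum_mul_sub_mul_single_sub hsym, graphLap]
  field_simp [hμ x]

theorem exists_solution_of_sub_super
    (hμ : ∀ x, 0 < μ x) (hsym : ∀ x y, w x y = w y x) (hw : ∀ x y, 0 ≤ w x y)
    {F f : V → ℝ → ℝ} (hF : ∀ x t, HasDerivAt (F x) (f x t) t)
    {φ ψ : V → ℝ} (hφψ : φ ≤ ψ)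
    (hsub : ∀ x, -graphLap μ w φ x + f x (φ x) ≤ 0)
    (hsuper : ∀ x, 0 ≤ -graphLap μ w ψ x + f x (ψ x)) :
    ∃ u ∈ Set.Icc φ ψ, ∀ x, -graphLap μ w u x + f x (u x) = 0 := by
  classical
  have hJ : Continuous (graphEnergy μ w F) :=
    continuous_graphEnergy fun x => continuous_iff_continuousAt.2 fun t => (hF x t).continuousAt
  obtain ⟨u, hu, hmin⟩ :=
    isCompact_Icc.exists_isMinOn (Set.nonempty_Icc.2 hφψ) hJ.continuousOn
  refine ⟨u, hu, fun x => ?_⟩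
  have hline : IsMinOn (fun t => graphEnergy μ w F (Function.update u x t))
      (Set.Icc (φ x) (ψ x)) (u x) := by
    intro t ht
    simpa using hmin ⟨le_update_iff.2 ⟨ht.1, fun y _ => hu.1 y⟩,
      update_le_iff.2 ⟨ht.2, fun y _ => hu.2 y⟩⟩
  have hderiv := hasDerivAt_graphEnergy_update (fun y => (hμ y).ne') hsym hF u x
  apply le_antisymm
  · rcases (hu.1 x).lt_or_eq with hlt | heq
    · exact nonpos_of_mul_nonpos_right (hline.hasDerivAt_nonpos hderiv hlt (hu.2 x)) (hμ x)
    · calc -graphLap μ w u x + f x (u x) ≤ -graphLap μ w φ x + f x (φ x) := by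
            rw [heq]; linarith [graphLap_le_of_le_of_eq (hμ x) (hw x) hu.1 heq]
        _ ≤ 0 := hsub x
  · rcases (hu.2 x).lt_or_eq with hlt | heq
    · exact nonneg_of_mul_nonneg_right (hline.hasDerivAt_nonneg hderiv (hu.1 x) hlt) (hμ x)
    · calc 0 ≤ -graphLap μ w ψ x + f x (ψ x) := hsuper x
        _ ≤ -graphLap μ w u x + f x (u x) := by
            rw [heq]; linarith [graphLap_le_of_le_of_eq (hμ x) (hw x) hu.2 heq]

end Graph

theorem gen_tzitzeica_existence_general {V : Type*} [Fintype V] [Nonempty V]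
    (μ : V → ℝ) (w : V → V → ℝ)
    (hμ : ∀ x, 0 < μ x) (hsym : ∀ x y, w x y = w y x) (hw : ∀ x y, 0 ≤ w x y)
    (h₁ h₂ : V → ℝ) (hh₁ : ∀ x, 0 < h₁ x) (hh₂ : ∀ x, 0 < h₂ x)
    (A B : ℝ) (hA : 0 < A) (hB : 0 < B)
    (hcomp : A * Finset.univ.sup' Finset.univ_nonempty h₁
      < B * Finset.univ.inf' Finset.univ_nonempty h₂) :
    ∃ u : V → ℝ, (∀ x, 0 < u x) ∧
      ∀ x, -graphLap μ w u x
        + h₁ x * Real.exp (A * u x) * (Real.exp (A * u x) - 1)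
        + h₂ x * Real.exp (-B * u x) * (Real.exp (-B * u x) - 1) = 0 := by
  set f : V → ℝ → ℝ := fun x => tzitzeicaNonlin A B (h₁ x) (h₂ x)
  have hcoeff : ∀ x, A * h₁ x < B * h₂ x := fun x =>
    calc A * h₁ x ≤ A * univ.sup' univ_nonempty h₁ := by
          gcongr; exact le_sup' h₁ (mem_univ x)
      _ < B * univ.inf' univ_nonempty h₂ := hcomp
      _ ≤ B * h₂ x := by gcongr; exact inf'_le h₂ (mem_univ x)
  obtain ⟨δ, hδ_sub, hδ⟩ : ∃ δ, (∀ x, f x δ < 0) ∧ δ ∈ Set.Ioi 0 :=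
    ((eventually_all.2 fun x => by
      simpa only [f, tzitzeicaNonlin_zero] using
        hasDerivAt_tzitzeicaNonlin_zero.eventually_lt_right (sub_neg.2 (hcoeff x))).and
      (self_mem_nhdsWithin : Set.Ioi (0 : ℝ) ∈ 𝓝[>] 0)).exists
  obtain ⟨β, hβ_super, hδβ⟩ : ∃ β, (∀ x, 0 < f x β) ∧ δ ≤ β :=
    ((eventually_all.2 fun x =>
      (tendsto_tzitzeicaNonlin_atTop hA (hh₁ x) (hh₂ x).le).eventually_gt_atTop 0).and
      (eventually_ge_atTop δ)).exists
  obtain ⟨u, hu, hsol⟩ := exists_solution_of_sub_super hμ hsym hw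
    (fun x => hasDerivAt_tzitzeicaPotential hA.ne' hB.ne') (φ := fun _ => δ) (ψ := fun _ => β)
    (fun _ => hδβ) (fun x => by simpa [graphLap_const] using (hδ_sub x).le)
    (fun x => by simpa [graphLap_const] using (hβ_super x).le)
  exact ⟨u, fun x => lt_of_lt_of_le hδ (hu.1 x), fun x => by rw [add_assoc]; exact hsol x⟩

theorem gen_tzitzeica_existence {V : Type*} [Fintype V] [Nonempty V]
    (μ : V → ℝ) (w : V → V → ℝ)
    (hμ : ∀ x, 0 < μ x) (hsym : ∀ x y, w x y = w y x) (hw : ∀ x y, 0 ≤ w x y)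
    (hconn : GraphConnected w)
    (h₁ h₂ : V → ℝ) (hh₁ : ∀ x, 0 < h₁ x) (hh₂ : ∀ x, 0 < h₂ x)
    (A B : ℝ) (hA : 0 < A) (hB : 0 < B)
    (hcomp : A * Finset.univ.sup' Finset.univ_nonempty h₁
      < B * Finset.univ.inf' Finset.univ_nonempty h₂) :
    ∃ u : V → ℝ, (∀ x, 0 < u x) ∧
      ∀ x, -graphLap μ w u x
        + h₁ x * Real.exp (A * u x) * (Real.exp (A * u x) - 1)
        + h₂ x * Real.exp (-B * u x) * (Real.exp (-B * u x) - 1) = 0 :=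
  gen_tzitzeica_existence_general μ w hμ hsym hw h₁ h₂ hh₁ hh₂ A B hA hB hcomp
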